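/- Fix an integer k ≥ 1. Let p_1, …, p_{k+3} be points in ℝ² with coordinates p_i = (x_i, y_i) and x_1 < x_2 < … < x_{k+3}, and let f : ℝ² → ℝ^{k+2} be the map f(x, y) = (1, x, x², …, x^k, y). For j = 1, …, k+3, let D_j denote the determinant of the (k+2)×(k+2) matrix whose rows are f(p_i) for i ∈ {1, …, k+3} \ {j}, listed in increasing order of i, and set s_j = sign(D_{k+4−j}) (so the sequence s_1, …, s_{k+3} corresponds to the lexicographic order of the (k+2)-element subsets of {1, …, k+3}). Then either s_j = 0 for all j, or there exist ε ∈ {+1, −1} and integers 0 ≤ a ≤ b ≤ k+3 with b − a ≤ 1 such that s_j = ε for 1 ≤ j ≤ a, s_j = 0 for a < j ≤ b, and s_j = −ε for b < j ≤ k+3. -/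

import Mathlib

/-!
Let `Q` be the polynomial of degree at most `k + 2` through all the points and `c` its coefficient
of `X ^ (k + 2)`. When the point `j` is deleted, `Q - c * ∏_{i ≠ j} (X - x_i)` still passes through
the remaining points and has degree at most `k + 1`, so the last column of the matrix is a
combination of its Vandermonde columns and `D_j = (B - c * x_j) * V_j`, where `V_j > 0` is the
Vandermonde determinant of the remaining abscissae and `B` does not depend on `j`. Hence `s` is the
sign sequence of an affine function along a strictly monotone sequence.
-/

open Finset Polynomial Matrix

theorem Fin.lt_card_filter_iff {n : ℕ} {P : Fin n → Prop} [DecidablePred P] (hP : Antitone P)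
    (j : Fin n) : (j : ℕ) < #{i | P i} ↔ P j := by
  constructor
  · intro hj
    by_contra hPj
    have hsub : ({i | P i} : Finset (Fin n)) ⊆ Iio j := fun i hi => by
      simp only [mem_filter, mem_univ, true_and] at hi
      exact mem_Iio.mpr (lt_of_not_ge fun hji => hPj (hP hji hi))
    have := (card_le_card hsub).trans_eq (Fin.card_Iio j)
    omega
  · intro hPj
    have hsub : Iic j ⊆ ({i | P i} : Finset (Fin n)) := fun i hi => by
      simpa using hP (mem_Iic.mp hi) hPj
    have := (Fin.card_Iic j).symm.trans_le (card_le_card hsub)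
    omega

theorem Real.sign_mul_of_pos {a : ℝ} (ha : 0 < a) (b : ℝ) : Real.sign (a * b) = Real.sign b := by
  rcases lt_trichotomy b 0 with hb | rfl | hb
  · rw [sign_of_neg hb, sign_of_neg (mul_neg_of_pos_of_neg ha hb)]
  · simp
  · rw [sign_of_pos hb, sign_of_pos (mul_pos ha hb)]

def IsLocallyUnimodal (n : ℕ) (s : Fin n → ℝ) : Prop :=
  (∀ j, s j = 0) ∨
    ∃ ε : ℝ, (ε = 1 ∨ ε = -1) ∧
      ∃ a b : ℕ, a ≤ b ∧ b ≤ n ∧ b - a ≤ 1 ∧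
        ∀ j : Fin n,
          ((j : ℕ) < a → s j = ε) ∧
          (a ≤ (j : ℕ) → (j : ℕ) < b → s j = 0) ∧
          (b ≤ (j : ℕ) → s j = -ε)

namespace IsLocallyUnimodal

variable {n : ℕ} {s : Fin n → ℝ}

theorem neg (hs : IsLocallyUnimodal n s) : IsLocallyUnimodal n (-s) := by
  refine hs.imp (fun h j => by simp [h j]) ?_
  rintro ⟨ε, hε, a, b, hab, hb, hba, h⟩
  refine ⟨-ε, by rcases hε with rfl | rfl <;> norm_num, a, b, hab, hb, hba, fun j => ?_⟩
  obtain ⟨h₁, h₂, h₃⟩ := h j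
  exact ⟨fun hj => by simp [h₁ hj], fun hj hj' => by simp [h₂ hj hj'], fun hj => by simp [h₃ hj]⟩

theorem const_sign (c : ℝ) : IsLocallyUnimodal n fun _ => Real.sign c := by
  by_cases hc : Real.sign c = 0
  · exact .inl fun _ => hc
  refine .inr ⟨_, ?_, n, n, le_rfl, le_rfl, by omega, fun _ => ⟨fun _ => rfl, by omega, by omega⟩⟩
  rcases Real.sign_apply_eq c with h | h | h <;> tauto

theorem sign_of_strictMono {u : Fin n → ℝ} (hu : StrictMono u) :
    IsLocallyUnimodal n fun j => Real.sign (u j) := by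
  have hneg : Antitone fun j => u j < 0 := fun i j hij h => (hu.monotone hij).trans_lt h
  have hnonpos : Antitone fun j => u j ≤ 0 := fun i j hij h => (hu.monotone hij).trans h
  have hab : #{j | u j < 0} ≤ #{j | u j ≤ 0} :=
    card_le_card (monotone_filter_right _ fun _ _ => le_of_lt)
  have hb : #{j | u j ≤ 0} ≤ n := card_le_univ _ |>.trans_eq (Fintype.card_fin n)
  refine .inr ⟨-1, .inr rfl, #{j | u j < 0}, #{j | u j ≤ 0}, hab, hb, ?_, fun j => ?_⟩
  · by_contra! hgap
    have hi : #{j | u j < 0} + 1 < n := by omega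
    have h₁ := (Fin.lt_card_filter_iff hneg ⟨_, (lt_add_one _).trans hi⟩).not.mp (lt_irrefl _)
    have h₂ := (Fin.lt_card_filter_iff hnonpos ⟨_, hi⟩).mp (by simp only; omega)
    have := hu (show (⟨_, (lt_add_one _).trans hi⟩ : Fin n) < ⟨_, hi⟩ from
      Fin.mk_lt_mk.mpr (lt_add_one _))
    linarith
  · have h₁ := Fin.lt_card_filter_iff hneg j
    have h₂ := Fin.lt_card_filter_iff hnonpos j
    refine ⟨fun hj => Real.sign_of_neg (h₁.mp hj), fun hj hj' => ?_, fun hj => ?_⟩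
    · exact Real.sign_eq_zero_iff.mpr (le_antisymm (h₂.mp hj') (not_lt.mp (h₁.not.mp hj.not_gt)))
    · rw [neg_neg]
      exact Real.sign_of_pos (not_le.mp (h₂.not.mp hj.not_gt))

theorem sign_sub_mul_of_strictAnti {x : Fin n → ℝ} (hx : StrictAnti x) (B c : ℝ) :
    IsLocallyUnimodal n fun j => Real.sign (B - c * x j) := by
  rcases lt_trichotomy c 0 with hc | rfl | hc
  · have hu : StrictMono fun j => c * x j - B := fun i j hij =>
      sub_lt_sub_right (mul_lt_mul_of_neg_left (hx hij) hc) B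
    convert (sign_of_strictMono hu).neg using 2 with j
    rw [Pi.neg_apply, ← Real.sign_neg, neg_sub]
  · simpa using const_sign B
  · exact sign_of_strictMono fun i j hij => sub_lt_sub_left (mul_lt_mul_of_pos_left (hx hij) hc) B

end IsLocallyUnimodal

namespace Polynomial

variable {R : Type*} [CommRing R] {n : ℕ}

theorem natDegree_sub_C_coeff_mul_prod_X_sub_C_le {Q : R[X]} (hQ : Q.natDegree ≤ n + 1)
    (z : Fin (n + 1) → R) :
    (Q - C (Q.coeff (n + 1)) * ∏ i, (X - C (z i))).natDegree ≤ n := by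
  nontriviality R
  have hN : (∏ i, (X - C (z i))).Monic := monic_prod_of_monic _ _ fun i _ => monic_X_sub_C (z i)
  have hNdeg : (∏ i, (X - C (z i))).natDegree = n + 1 := by
    simp [natDegree_prod_of_monic _ _ fun i _ => monic_X_sub_C (z i)]
  rw [natDegree_le_iff_coeff_eq_zero]
  intro m hm
  obtain rfl | hm : m = n + 1 ∨ n + 1 < m := by
    have : n < m := by exact_mod_cast hm
    omega
  · have hlead := hN.coeff_natDegree
    rw [hNdeg] at hlead
    rw [coeff_sub, coeff_C_mul, hlead, mul_one, sub_self]
  · rw [coeff_sub, coeff_C_mul, coeff_eq_zero_of_natDegree_lt (hQ.trans_lt hm),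
      coeff_eq_zero_of_natDegree_lt (hNdeg.trans_lt hm), mul_zero, sub_zero]

theorem coeff_sub_C_coeff_mul_prod_X_sub_C (Q : R[X]) (z : Fin (n + 1) → R) :
    (Q - C (Q.coeff (n + 1)) * ∏ i, (X - C (z i))).coeff n =
      Q.coeff n + Q.coeff (n + 1) * ∑ i, z i := by
  have := prod_X_sub_C_coeff_card_pred univ z (by simp)
  simp only [card_univ, Fintype.card_fin, Nat.add_sub_cancel] at this
  rw [coeff_sub, coeff_C_mul, this]
  ring

end Polynomial

theorem Lagrange.exists_natDegree_le_eval_eq {F : Type*} [Field F] {n : ℕ}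
    {x : Fin (n + 1) → F} (hx : Function.Injective x) (y : Fin (n + 1) → F) :
    ∃ Q : F[X], Q.natDegree ≤ n ∧ ∀ i, Q.eval (x i) = y i := by
  refine ⟨interpolate univ x y, ?_, fun i => eval_interpolate_at_node y hx.injOn (mem_univ i)⟩
  have := degree_interpolate_lt (s := univ) y hx.injOn
  simp only [card_univ, Fintype.card_fin] at this
  exact natDegree_le_of_degree_le (Order.le_of_lt_succ (by exact_mod_cast this))

namespace Matrix

variable {R : Type*} [CommRing R] {n : ℕ}

theorem det_updateCol_last_eval_vandermonde {q : R[X]} (hq : q.natDegree ≤ n)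
    (z : Fin (n + 1) → R) :
    ((vandermonde z).updateCol (Fin.last n) fun i => q.eval (z i)).det =
      q.coeff n * (vandermonde z).det := by
  have hcol : (fun i => q.eval (z i)) =
      fun i => ∑ m : Fin (n + 1), q.coeff m • vandermonde z i m := by
    funext i
    simp only [eval_eq_sum_range' (Nat.lt_succ_of_le hq), vandermonde_apply, smul_eq_mul,
      Fin.sum_univ_eq_sum_range (fun m => q.coeff m * z i ^ m)]
  rw [hcol, det_updateCol_sum, Fin.val_last, smul_eq_mul]

theorem det_updateCol_last_eval_vandermonde_of_natDegree_le_succ {Q : R[X]}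
    (hQ : Q.natDegree ≤ n + 1) (z : Fin (n + 1) → R) :
    ((vandermonde z).updateCol (Fin.last n) fun i => Q.eval (z i)).det =
      (Q.coeff n + Q.coeff (n + 1) * ∑ i, z i) * (vandermonde z).det := by
  set q := Q - C (Q.coeff (n + 1)) * ∏ i, (X - C (z i))
  have hq : ∀ i, q.eval (z i) = Q.eval (z i) := fun i => by
    simp [q, eval_prod, prod_eq_zero (mem_univ i)]
  simp only [← hq, det_updateCol_last_eval_vandermonde
    (natDegree_sub_C_coeff_mul_prod_X_sub_C_le hQ z), q, coeff_sub_C_coeff_mul_prod_X_sub_C]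

theorem det_vandermonde_pos {R : Type*} [CommRing R] [PartialOrder R] [IsStrictOrderedRing R]
    {z : Fin n → R} (hz : StrictMono z) : 0 < (vandermonde z).det := by
  rw [det_vandermonde]
  exact prod_pos fun i _ => prod_pos fun j hj => sub_pos.mpr (hz (mem_Ioi.mp hj))

end Matrix

theorem locally_unimodal_general (k : ℕ)
    (p : Fin (k + 3) → ℝ × ℝ) (hp : StrictMono fun i => (p i).1)
    (f : ℝ × ℝ → Fin (k + 2) → ℝ)
    (hf : ∀ q : ℝ × ℝ, ∀ j : Fin (k + 2),
      f q j = if (j : ℕ) = k + 1 then q.2 else q.1 ^ (j : ℕ))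
    (D : Fin (k + 3) → ℝ)
    (hD : ∀ j : Fin (k + 3),
      D j = Matrix.det (Matrix.of fun i : Fin (k + 2) => f (p (j.succAbove i))))
    (s : Fin (k + 3) → ℝ)
    (hs : ∀ j : Fin (k + 3), s j = Real.sign (D j.rev)) :
    (∀ j, s j = 0) ∨
      ∃ ε : ℝ, (ε = 1 ∨ ε = -1) ∧
        ∃ a b : ℕ, a ≤ b ∧ b ≤ k + 3 ∧ b - a ≤ 1 ∧
          ∀ j : Fin (k + 3),
            ((j : ℕ) < a → s j = ε) ∧
            (a ≤ (j : ℕ) → (j : ℕ) < b → s j = 0) ∧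
            (b ≤ (j : ℕ) → s j = -ε) := by
  set x : Fin (k + 3) → ℝ := fun i => (p i).1
  obtain ⟨Q, hQ, hQx⟩ := Lagrange.exists_natDegree_le_eval_eq hp.injective fun i => (p i).2
  set c := Q.coeff (k + 2)
  set B := Q.coeff (k + 1) + c * ∑ i, x i
  have hDj : ∀ j, D j = (B - c * x j) * (vandermonde (x ∘ j.succAbove)).det := by
    intro j
    have hrows : (of fun i => f (p (j.succAbove i))) =
        (vandermonde (x ∘ j.succAbove)).updateCol (Fin.last (k + 1))
          fun i => Q.eval ((x ∘ j.succAbove) i) := by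
      ext i m
      simp [hf, updateCol_apply, Fin.ext_iff, hQx, x]
    rw [hD, hrows, det_updateCol_last_eval_vandermonde_of_natDegree_le_succ hQ]
    have hsum := Fin.sum_univ_succAbove x j
    congr 1
    simp only [Function.comp_apply]
    linear_combination -c * hsum
  have hs' : s = fun j => Real.sign (B - c * x j.rev) := funext fun j => by
    rw [hs, hDj, mul_comm,
      Real.sign_mul_of_pos (det_vandermonde_pos (hp.comp (Fin.strictMono_succAbove _)))]
  subst hs'
  exact IsLocallyUnimodal.sign_sub_mul_of_strictAnti (hp.comp_strictAnti Fin.rev_strictAnti) B c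

/-- (Locally unimodal property.)  With `D_j` as the determinant omitting the `j`-th point and
`s_j = sign(D_{k+4−j})` (the lexicographic order of the `(k+2)`-subsets), the sequence
`s₁,…,s_{k+3}` is all zero, or of the form `ε,…,ε,0,…,0,−ε,…,−ε` with at most one `0`.
Here `s` is indexed by `Fin (k+3)` (0-based), so `s j = sign(D (rev j))`. -/
theorem locally_unimodal (k : ℕ) (hk : 1 ≤ k)
    (p : Fin (k + 3) → ℝ × ℝ) (hp : StrictMono fun i => (p i).1)
    (f : ℝ × ℝ → Fin (k + 2) → ℝ)
    (hf : ∀ q : ℝ × ℝ, ∀ j : Fin (k + 2),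
      f q j = if (j : ℕ) = k + 1 then q.2 else q.1 ^ (j : ℕ))
    (D : Fin (k + 3) → ℝ)
    (hD : ∀ j : Fin (k + 3),
      D j = Matrix.det (Matrix.of fun i : Fin (k + 2) => f (p (j.succAbove i))))
    (s : Fin (k + 3) → ℝ)
    (hs : ∀ j : Fin (k + 3), s j = Real.sign (D j.rev)) :
    (∀ j, s j = 0) ∨
      ∃ ε : ℝ, (ε = 1 ∨ ε = -1) ∧
        ∃ a b : ℕ, a ≤ b ∧ b ≤ k + 3 ∧ b - a ≤ 1 ∧
          ∀ j : Fin (k + 3),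
            ((j : ℕ) < a → s j = ε) ∧
            (a ≤ (j : ℕ) → (j : ℕ) < b → s j = 0) ∧
            (b ≤ (j : ℕ) → s j = -ε) :=
  locally_unimodal_general k p hp f hf D hD s hs
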